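/- Let n ≥ 1 and N ≥ 2 be integers. Then there exists a constant C such that for all nonnegative functions A_1, …, A_N on ℤ^n, Σ_{ν_1, …, ν_N ∈ ℤ^n} (1 + |ν_1| + ⋯ + |ν_N|)^{−Nn/2} ∏_{j=1}^N A_j(ν_j) ≤ C ∏_{j=1}^N ‖A_j‖_{ℓ²(ℤ^n)}. -/

import Mathlib

open MeasureTheory Complex Real SchwartzMap
open scoped ENNReal NNReal BigOperators RealInnerProductSpace

noncomputable section

/-- `ℝ^n` with the Euclidean norm. -/
abbrev Rn (n : ℕ) : Type := EuclideanSpace ℝ (Fin n)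

/-- Fourier transform with the convention `f̂(ξ) = ∫ e^{-i ξ·x} f(x) dx`. -/
def ft (n : ℕ) (f : Rn n → ℂ) (ξ : Rn n) : ℂ :=
  ∫ x : Rn n, Complex.exp (-Complex.I * ((⟪ξ, x⟫ : ℝ) : ℂ)) * f x

/-- Inverse Fourier transform `F⁻¹g(x) = (2π)^{-n} ∫ e^{i x·ξ} g(ξ) dξ`. -/
def invFt (n : ℕ) (g : Rn n → ℂ) (x : Rn n) : ℂ :=
  (((2 * π) ^ n : ℝ) : ℂ)⁻¹ * ∫ ξ : Rn n, Complex.exp (Complex.I * ((⟪x, ξ⟫ : ℝ) : ℂ)) * g ξ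

/-- The `N`-linear pseudo-differential operator `T_σ` with `x`-dependent symbol. -/
def pdo (n N : ℕ) (σ : Rn n × (Fin N → Rn n) → ℂ) (f : Fin N → 𝓢(Rn n, ℂ)) (x : Rn n) : ℂ :=
  (((2 * π) ^ (N * n) : ℝ) : ℂ)⁻¹ *
    ∫ ξ : Fin N → Rn n,
      Complex.exp (Complex.I * ((∑ j, ⟪x, ξ j⟫ : ℝ) : ℂ)) * σ (x, ξ) * ∏ j, ft n ⇑(f j) (ξ j)

/-- The `N`-linear Fourier multiplier operator `T_σ` (`x`-independent symbol). -/
def pdoX (n N : ℕ) (σ : (Fin N → Rn n) → ℂ) (f : Fin N → 𝓢(Rn n, ℂ)) (x : Rn n) : ℂ :=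
  (((2 * π) ^ (N * n) : ℝ) : ℂ)⁻¹ *
    ∫ ξ : Fin N → Rn n,
      Complex.exp (Complex.I * ((∑ j, ⟪x, ξ j⟫ : ℝ) : ℂ)) * σ ξ * ∏ j, ft n ⇑(f j) (ξ j)

/-- The multilinear Hörmander class `S^m_{0,0}(ℝ^n, N)`. -/
def SymbolClassS (n N : ℕ) (m : ℝ) (σ : Rn n × (Fin N → Rn n) → ℂ) : Prop :=
  ContDiff ℝ (⊤ : ℕ∞) σ ∧
    ∀ k : ℕ, ∃ C : ℝ, ∀ (x : Rn n) (ξ : Fin N → Rn n),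
      ‖iteratedFDeriv ℝ k σ (x, ξ)‖ ≤ C * (1 + ∑ j, ‖ξ j‖) ^ m

/-- The class `S^{m⃗}_{0,0}(ℝ^n, N)` with a vector of orders. -/
def SymbolClassV (n N : ℕ) (m : Fin N → ℝ) (σ : Rn n × (Fin N → Rn n) → ℂ) : Prop :=
  ContDiff ℝ (⊤ : ℕ∞) σ ∧
    ∀ k : ℕ, ∃ C : ℝ, ∀ (x : Rn n) (ξ : Fin N → Rn n),
      ‖iteratedFDeriv ℝ k σ (x, ξ)‖ ≤ C * ∏ j, (1 + ‖ξ j‖) ^ (m j)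

/-- The class `S^m_{0,0}(ℝ^n, N)^×` of `x`-independent symbols (multipliers). -/
def MultClassS (n N : ℕ) (m : ℝ) (σ : (Fin N → Rn n) → ℂ) : Prop :=
  ContDiff ℝ (⊤ : ℕ∞) σ ∧
    ∀ k : ℕ, ∃ C : ℝ, ∀ ξ : Fin N → Rn n,
      ‖iteratedFDeriv ℝ k σ ξ‖ ≤ C * (1 + ∑ j, ‖ξ j‖) ^ m

/-- Euclidean norm of a lattice point in `ℤ^n`. -/
def zn (n : ℕ) (ν : Fin n → ℤ) : ℝ := Real.sqrt (∑ i, ((ν i : ℝ)) ^ 2)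

/-- Embedding of `ℤ^n` into `ℝ^n`. -/
def zv (n : ℕ) (k : Fin n → ℤ) : Rn n := WithLp.toLp 2 (fun i => (k i : ℝ))

/-!
Split `ν = (x, y) ∈ ℤⁿ × (ℤⁿ)^(N-1)`: the sum is the bilinear form of the kernel
`K(x, y) = (1 + |x| + |y|)^(-Nn/2)`, with `|y| = Σ |y_j|`, evaluated at `A₁` and `A₂ ⊗ ⋯ ⊗ A_N`.
The Schur test with the weights `(1 + |x|)^(-n/2)` and `(1 + |y|)^(-(N-1)n/2)` bounds it, because
both weighted row sums are lattice sums `Σ_{ν ∈ ℤ^d} (1 + R ν)^(-r) (t + R ν)^(-s) ≲ t^(d-r-s)`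
with `r < d < r + s`. Since `R ν` dominates every `|ν_i|`, such a sum is at most the `d`-th power
of a one-dimensional sum with exponents `r/d, s/d`, and that one is compared with
`∫₀^∞ x^(-r/d) (t + x)^(-s/d) dx`, split at `x = t`.
-/

open Set

theorem ENNReal.tsum_mul_le_L2_mul_L2 {α : Type*} (f g : α → ℝ≥0∞) :
    ∑' i, f i * g i ≤ (∑' i, f i ^ 2) ^ (1 / 2 : ℝ) * (∑' i, g i ^ 2) ^ (1 / 2 : ℝ) := by
  rw [ENNReal.tsum_eq_iSup_sum]
  refine iSup_le fun s => ?_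
  calc ∑ i ∈ s, f i * g i
      ≤ (∑ i ∈ s, f i ^ (2 : ℝ)) ^ (1 / 2 : ℝ) * (∑ i ∈ s, g i ^ (2 : ℝ)) ^ (1 / 2 : ℝ) :=
        ENNReal.inner_le_Lp_mul_Lq s f g Real.HolderConjugate.two_two
    _ ≤ _ := by
        simp_rw [ENNReal.rpow_two]
        gcongr <;> exact ENNReal.sum_le_tsum s

theorem ENNReal.sq_rpow_half (u : ℝ≥0∞) : (u ^ (1 / 2 : ℝ)) ^ 2 = u := by
  simpa using ENNReal.rpow_inv_natCast_pow two_ne_zero u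

theorem ENNReal.tsum_tsum_mul_div_mul_sq_le {X Y : Type*} (K : X → Y → ℝ≥0∞)
    {p : X → ℝ≥0∞} {q : Y → ℝ≥0∞} (hp0 : ∀ x, p x ≠ 0) (hp : ∀ x, p x ≠ ⊤) {C : ℝ≥0∞}
    (hK : ∀ x, ∑' y, K x y * q y ≤ C * p x) (a : X → ℝ≥0∞) :
    ∑' x, ∑' y, K x y * q y / p x * a x ^ 2 ≤ C * ∑' x, a x ^ 2 := by
  calc ∑' x, ∑' y, K x y * q y / p x * a x ^ 2
      = ∑' x, a x ^ 2 * (p x)⁻¹ * ∑' y, K x y * q y := by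
        refine tsum_congr fun x => ?_
        rw [← ENNReal.tsum_mul_left]
        exact tsum_congr fun y => by rw [div_eq_mul_inv]; ring
    _ ≤ ∑' x, a x ^ 2 * (p x)⁻¹ * (C * p x) := ENNReal.tsum_le_tsum fun x => by gcongr; exact hK x
    _ = C * ∑' x, a x ^ 2 := by
        rw [← ENNReal.tsum_mul_left]
        refine tsum_congr fun x => ?_
        rw [mul_comm C, ← mul_assoc, mul_assoc _ _ (p x), ENNReal.inv_mul_cancel (hp0 x) (hp x),
          mul_one, mul_comm]

theorem ENNReal.schur_test {X Y : Type*} (K : X → Y → ℝ≥0∞) {p : X → ℝ≥0∞} {q : Y → ℝ≥0∞}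
    (hp0 : ∀ x, p x ≠ 0) (hp : ∀ x, p x ≠ ⊤) (hq0 : ∀ y, q y ≠ 0) (hq : ∀ y, q y ≠ ⊤)
    {C₁ C₂ : ℝ≥0∞} (h₁ : ∀ x, ∑' y, K x y * q y ≤ C₁ * p x)
    (h₂ : ∀ y, ∑' x, K x y * p x ≤ C₂ * q y) (a : X → ℝ≥0∞) (b : Y → ℝ≥0∞) :
    ∑' x, ∑' y, K x y * (a x * b y) ≤
      (C₁ * C₂) ^ (1 / 2 : ℝ) * (∑' x, a x ^ 2) ^ (1 / 2 : ℝ) * (∑' y, b y ^ 2) ^ (1 / 2 : ℝ) := by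
  set F : X × Y → ℝ≥0∞ := fun z => (K z.1 z.2 * q z.2 / p z.1) ^ (1 / 2 : ℝ) * a z.1
  set G : X × Y → ℝ≥0∞ := fun z => (K z.1 z.2 * p z.1 / q z.2) ^ (1 / 2 : ℝ) * b z.2
  have hFG : ∀ x y, K x y * (a x * b y) = F (x, y) * G (x, y) := fun x y => by
    have hK : (K x y * q y / p x) * (K x y * p x / q y) = K x y ^ (2 : ℝ) := by
      calc (K x y * q y / p x) * (K x y * p x / q y)
          = K x y ^ 2 * ((p x * (p x)⁻¹) * (q y * (q y)⁻¹)) := by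
            simp only [div_eq_mul_inv]; ring
        _ = K x y ^ (2 : ℝ) := by
            rw [ENNReal.mul_inv_cancel (hp0 x) (hp x), ENNReal.mul_inv_cancel (hq0 y) (hq y),
              mul_one, mul_one, ENNReal.rpow_two]
    simp only [F, G]
    rw [mul_mul_mul_comm, ← ENNReal.mul_rpow_of_nonneg _ _ (by norm_num), hK,
      ← ENNReal.rpow_mul]
    norm_num
  have hF : ∑' z, F z ^ 2 ≤ C₁ * ∑' x, a x ^ 2 := by
    simp only [F, mul_pow, ENNReal.sq_rpow_half]
    rw [ENNReal.tsum_prod']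
    exact ENNReal.tsum_tsum_mul_div_mul_sq_le K hp0 hp h₁ a
  have hG : ∑' z, G z ^ 2 ≤ C₂ * ∑' y, b y ^ 2 := by
    simp only [G, mul_pow, ENNReal.sq_rpow_half]
    rw [ENNReal.tsum_prod', ENNReal.tsum_comm]
    exact ENNReal.tsum_tsum_mul_div_mul_sq_le (fun y x => K x y) hq0 hq h₂ b
  calc ∑' x, ∑' y, K x y * (a x * b y)
      = ∑' z, F z * G z := by rw [ENNReal.tsum_prod']; exact tsum_congr fun x => tsum_congr (hFG x)
    _ ≤ (∑' z, F z ^ 2) ^ (1 / 2 : ℝ) * (∑' z, G z ^ 2) ^ (1 / 2 : ℝ) :=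
        ENNReal.tsum_mul_le_L2_mul_L2 F G
    _ ≤ (C₁ * ∑' x, a x ^ 2) ^ (1 / 2 : ℝ) * (C₂ * ∑' y, b y ^ 2) ^ (1 / 2 : ℝ) := by
        gcongr
    _ = _ := by
        simp only [ENNReal.mul_rpow_of_nonneg _ _ (by norm_num : (0 : ℝ) ≤ 1 / 2)]
        ring

theorem ENNReal.tsum_prod_apply_le_prod_tsum {ι α : Type*} [Fintype ι] (f : ι → α → ℝ≥0∞) :
    ∑' ν : ι → α, ∏ i, f i (ν i) ≤ ∏ i, ∑' a, f i a := by
  classical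
  rw [ENNReal.tsum_eq_iSup_sum]
  refine iSup_le fun S => ?_
  calc ∑ ν ∈ S, ∏ i, f i (ν i)
      ≤ ∑ ν ∈ Fintype.piFinset fun i => S.image (· i), ∏ i, f i (ν i) :=
        Finset.sum_le_sum_of_subset fun ν hν =>
          Fintype.mem_piFinset.mpr fun i => Finset.mem_image_of_mem _ hν
    _ = ∏ i, ∑ a ∈ S.image (· i), f i a := (Finset.prod_univ_sum _ _).symm
    _ ≤ ∏ i, ∑' a, f i a := Finset.prod_le_prod' fun i _ => ENNReal.sum_le_tsum _

theorem ENNReal.tsum_prod_apply_sq_rpow_half_le {ι α : Type*} [Fintype ι] (f : ι → α → ℝ≥0∞) :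
    (∑' ν : ι → α, (∏ i, f i (ν i)) ^ 2) ^ (1 / 2 : ℝ) ≤ ∏ i, (∑' a, f i a ^ 2) ^ (1 / 2 : ℝ) := by
  rw [ENNReal.prod_rpow_of_nonneg (by norm_num)]
  gcongr
  simp only [← Finset.prod_pow]
  exact ENNReal.tsum_prod_apply_le_prod_tsum fun i a => f i a ^ 2

theorem lintegral_Ioc_zero_rpow {r t : ℝ} (hr : -1 < r) (ht : 0 ≤ t) :
    ∫⁻ x in Ioc 0 t, ENNReal.ofReal (x ^ r) = ENNReal.ofReal (t ^ (r + 1) / (r + 1)) := by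
  have hint : IntegrableOn (fun x : ℝ => x ^ r) (Ioc 0 t) :=
    (intervalIntegrable_iff_integrableOn_Ioc_of_le ht).mp
      (intervalIntegral.intervalIntegrable_rpow' hr)
  rw [← ofReal_integral_eq_lintegral_ofReal hint
      ((ae_restrict_iff' measurableSet_Ioc).mpr
        (ae_of_all _ fun x hx => Real.rpow_nonneg hx.1.le r)),
    ← intervalIntegral.integral_of_le ht, integral_rpow (Or.inl hr),
    Real.zero_rpow (by linarith), sub_zero]

theorem lintegral_Ioi_rpow {r t : ℝ} (hr : r < -1) (ht : 0 < t) :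
    ∫⁻ x in Ioi t, ENNReal.ofReal (x ^ r) = ENNReal.ofReal (-t ^ (r + 1) / (r + 1)) := by
  rw [← ofReal_integral_eq_lintegral_ofReal (integrableOn_Ioi_rpow_of_lt hr ht)
      ((ae_restrict_iff' measurableSet_Ioi).mpr
        (ae_of_all _ fun x hx => Real.rpow_nonneg (ht.trans hx).le r)),
    integral_Ioi_rpow_of_lt hr ht]

theorem lintegral_Ioi_zero_rpow_neg_mul_add_rpow_neg_le {r s t : ℝ} (hr1 : r < 1)
    (hrs : 1 < r + s) (ht : 0 < t) :
    ∫⁻ x in Ioi 0, ENNReal.ofReal (x ^ (-r) * (t + x) ^ (-s)) ≤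
      ENNReal.ofReal ((1 / (1 - r) + 1 / (r + s - 1)) * t ^ (1 - r - s)) := by
  have hs : 0 ≤ s := by linarith
  have hnear : ∀ x ∈ Ioc 0 t, x ^ (-r) * (t + x) ^ (-s) ≤ t ^ (-s) * x ^ (-r) := fun x hx => by
    rw [mul_comm]
    exact mul_le_mul_of_nonneg_right
      (Real.rpow_le_rpow_of_nonpos ht (by linarith [hx.1]) (by linarith))
      (Real.rpow_nonneg hx.1.le _)
  have hfar : ∀ x ∈ Ioi t, x ^ (-r) * (t + x) ^ (-s) ≤ x ^ (-(r + s)) := fun x hx => by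
    have hx0 : 0 < x := ht.trans hx
    rw [neg_add, Real.rpow_add hx0]
    exact mul_le_mul_of_nonneg_left
      (Real.rpow_le_rpow_of_nonpos hx0 (by linarith) (by linarith)) (Real.rpow_nonneg hx0.le _)
  calc ∫⁻ x in Ioi 0, ENNReal.ofReal (x ^ (-r) * (t + x) ^ (-s))
      ≤ (∫⁻ x in Ioc 0 t, ENNReal.ofReal (x ^ (-r) * (t + x) ^ (-s))) +
          ∫⁻ x in Ioi t, ENNReal.ofReal (x ^ (-r) * (t + x) ^ (-s)) := by
        rw [← Ioc_union_Ioi_eq_Ioi ht.le]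
        exact lintegral_union_le _ _ _
    _ ≤ (∫⁻ x in Ioc 0 t, ENNReal.ofReal (t ^ (-s)) * ENNReal.ofReal (x ^ (-r))) +
          ∫⁻ x in Ioi t, ENNReal.ofReal (x ^ (-(r + s))) := by
        refine add_le_add (setLIntegral_mono' measurableSet_Ioc fun x hx => ?_)
          (setLIntegral_mono' measurableSet_Ioi fun x hx => ENNReal.ofReal_le_ofReal (hfar x hx))
        rw [← ENNReal.ofReal_mul (Real.rpow_nonneg ht.le _)]
        exact ENNReal.ofReal_le_ofReal (hnear x hx)
    _ = ENNReal.ofReal ((1 / (1 - r) + 1 / (r + s - 1)) * t ^ (1 - r - s)) := by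
        rw [lintegral_const_mul _ (by fun_prop), lintegral_Ioc_zero_rpow (by linarith) ht.le,
          lintegral_Ioi_rpow (by linarith) ht, ← ENNReal.ofReal_mul (Real.rpow_nonneg ht.le _)]
        have hnear_eq : t ^ (-s) * (t ^ (-r + 1) / (-r + 1)) = t ^ (1 - r - s) / (1 - r) := by
          rw [mul_div_assoc', ← Real.rpow_add ht]; ring_nf
        have hfar_eq : -t ^ (-(r + s) + 1) / (-(r + s) + 1) = t ^ (1 - r - s) / (r + s - 1) := by
          rw [← neg_div_neg_eq, neg_neg]; ring_nf
        rw [hnear_eq, hfar_eq, ← ENNReal.ofReal_add (by positivity) (by positivity)]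
        congr 1
        ring

theorem pairwise_disjoint_Ioo_natCast :
    Pairwise (Function.onFun Disjoint fun m : ℕ => Ioo (m : ℝ) (m + 1)) := by
  intro i j hij
  have := pairwise_disjoint_Ioo_intCast ℝ (Nat.cast_injective.ne hij : (i : ℤ) ≠ j)
  simpa [Function.onFun] using this

theorem tsum_nat_one_add_rpow_neg_mul_add_rpow_neg_le {r s t : ℝ} (hr : 0 ≤ r) (hr1 : r < 1)
    (hrs : 1 < r + s) (ht : 1 ≤ t) :
    ∑' m : ℕ, ENNReal.ofReal ((1 + m) ^ (-r) * (t + m) ^ (-s)) ≤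
      ENNReal.ofReal (2 ^ s * (1 / (1 - r) + 1 / (r + s - 1)) * t ^ (1 - r - s)) := by
  have hs : 0 ≤ s := by linarith
  have hpt : ∀ m : ℕ, ∀ x ∈ Ioo (m : ℝ) (m + 1),
      (1 + m) ^ (-r) * (t + m) ^ (-s) ≤ 2 ^ s * (x ^ (-r) * (t + x) ^ (-s)) := by
    intro m x hx
    have hx0 : 0 < x := (Nat.cast_nonneg m).trans_lt hx.1
    have htm : 0 < t + m := by positivity
    have hdouble : (t + m) ^ (-s) = 2 ^ s * (2 * (t + m)) ^ (-s) := by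
      rw [Real.mul_rpow two_pos.le htm.le, ← mul_assoc, ← Real.rpow_add two_pos]
      simp
    rw [hdouble, mul_left_comm]
    gcongr 2 ^ s * (?_ * ?_)
    · exact Real.rpow_le_rpow_of_nonpos hx0 (by linarith [hx.2]) (by linarith)
    · exact Real.rpow_le_rpow_of_nonpos (by linarith) (by linarith [hx.2]) (by linarith)
  calc ∑' m : ℕ, ENNReal.ofReal ((1 + m) ^ (-r) * (t + m) ^ (-s))
      ≤ ∑' m : ℕ, ∫⁻ x in Ioo (m : ℝ) (m + 1),
          ENNReal.ofReal (2 ^ s * (x ^ (-r) * (t + x) ^ (-s))) := by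
        refine ENNReal.tsum_le_tsum fun m => ?_
        calc ENNReal.ofReal ((1 + m) ^ (-r) * (t + m) ^ (-s))
            = ∫⁻ _ in Ioo (m : ℝ) (m + 1), ENNReal.ofReal ((1 + m) ^ (-r) * (t + m) ^ (-s)) := by
              simp
          _ ≤ _ := setLIntegral_mono' measurableSet_Ioo fun x hx =>
              ENNReal.ofReal_le_ofReal (hpt m x hx)
    _ = ∫⁻ x in ⋃ m : ℕ, Ioo (m : ℝ) (m + 1),
          ENNReal.ofReal (2 ^ s * (x ^ (-r) * (t + x) ^ (-s))) :=
        (lintegral_iUnion (fun _ => measurableSet_Ioo) pairwise_disjoint_Ioo_natCast _).symm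
    _ ≤ ∫⁻ x in Ioi 0, ENNReal.ofReal (2 ^ s * (x ^ (-r) * (t + x) ^ (-s))) :=
        lintegral_mono_set (iUnion_subset fun m x hx => (Nat.cast_nonneg m).trans_lt hx.1)
    _ = ENNReal.ofReal (2 ^ s) * ∫⁻ x in Ioi 0, ENNReal.ofReal (x ^ (-r) * (t + x) ^ (-s)) := by
        rw [← lintegral_const_mul _ (by fun_prop)]
        simp_rw [ENNReal.ofReal_mul (Real.rpow_nonneg two_pos.le s)]
    _ ≤ ENNReal.ofReal (2 ^ s) *
          ENNReal.ofReal ((1 / (1 - r) + 1 / (r + s - 1)) * t ^ (1 - r - s)) := by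
        gcongr
        exact lintegral_Ioi_zero_rpow_neg_mul_add_rpow_neg_le hr1 hrs (by linarith)
    _ = _ := by rw [← ENNReal.ofReal_mul (Real.rpow_nonneg two_pos.le s), mul_assoc]

theorem tsum_int_one_add_abs_rpow_neg_mul_add_abs_rpow_neg_le {r s t : ℝ} (hr : 0 ≤ r)
    (hr1 : r < 1) (hrs : 1 < r + s) (ht : 1 ≤ t) :
    ∑' k : ℤ, ENNReal.ofReal ((1 + |(k : ℝ)|) ^ (-r) * (t + |(k : ℝ)|) ^ (-s)) ≤
      ENNReal.ofReal (2 ^ (s + 1) * (1 / (1 - r) + 1 / (r + s - 1)) * t ^ (1 - r - s)) := by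
  set g : ℕ → ℝ≥0∞ := fun m => ENNReal.ofReal ((1 + m) ^ (-r) * (t + m) ^ (-s))
  calc ∑' k : ℤ, ENNReal.ofReal ((1 + |(k : ℝ)|) ^ (-r) * (t + |(k : ℝ)|) ^ (-s))
      = (∑' m : ℕ, g m) + ∑' m : ℕ, g (m + 1) := by
        rw [tsum_of_nat_of_neg_add_one ENNReal.summable ENNReal.summable]
        congr 1 <;> refine tsum_congr fun m => ?_
        · simp [g]
        · simp only [g, Int.cast_neg, Int.cast_add, Int.cast_natCast, Int.cast_one, abs_neg,
            Nat.cast_add, Nat.cast_one]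
          rw [abs_of_nonneg (by positivity)]
    _ ≤ (∑' m : ℕ, g m) + ∑' m : ℕ, g m :=
        add_le_add le_rfl (ENNReal.tsum_comp_le_tsum_of_injective (add_left_injective 1) g)
    _ ≤ _ := by
        rw [← two_mul, Real.rpow_add_one two_ne_zero, mul_comm _ (2 : ℝ), mul_assoc, mul_assoc,
          ENNReal.ofReal_mul zero_le_two, ENNReal.ofReal_ofNat, ← mul_assoc]
        gcongr
        exact tsum_nat_one_add_rpow_neg_mul_add_rpow_neg_le hr hr1 hrs ht

theorem tsum_lattice_one_add_rpow_neg_mul_add_rpow_neg_le {ι : Type*} [Fintype ι] {r s : ℝ}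
    (hr : 0 ≤ r) (hrd : r < Fintype.card ι) (hrs : Fintype.card ι < r + s) :
    ∃ C : ℝ≥0, ∀ R : (ι → ℤ) → ℝ, (∀ ν i, |(ν i : ℝ)| ≤ R ν) → ∀ t : ℝ, 1 ≤ t →
      ∑' ν : ι → ℤ, ENNReal.ofReal ((1 + R ν) ^ (-r) * (t + R ν) ^ (-s)) ≤
        C * ENNReal.ofReal (t ^ ((Fintype.card ι : ℝ) - r - s)) := by
  obtain ⟨d, hd_eq⟩ : ∃ d, Fintype.card ι = d := ⟨_, rfl⟩
  rw [hd_eq] at hrd hrs ⊢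
  have hd : (0 : ℝ) < d := hr.trans_lt hrd
  obtain ⟨i₀⟩ : Nonempty ι := Fintype.card_pos_iff.mp (by rw [hd_eq]; exact_mod_cast hd)
  have hr1 : r / d < 1 := (div_lt_one hd).mpr hrd
  have hrs1 : 1 < r / d + s / d := by rw [← add_div, one_lt_div hd]; exact hrs
  set C₀ : ℝ := 2 ^ (s / d + 1) * (1 / (1 - r / d) + 1 / (r / d + s / d - 1))
  have hC₀ : 0 ≤ C₀ := by
    have : 0 < 1 - r / d := by linarith
    have : 0 < r / d + s / d - 1 := by linarith
    positivity
  refine ⟨C₀.toNNReal ^ d, fun R hR t ht => ?_⟩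
  have hsplit : ∀ x e : ℝ, 0 ≤ x → x ^ (-e) = ∏ _i : ι, x ^ (-(e / d)) := fun x e hx => by
    rw [Finset.prod_const, Finset.card_univ, hd_eq, ← Real.rpow_mul_natCast hx]
    congr 1
    field_simp
  set G : ℤ → ℝ := fun k => (1 + |(k : ℝ)|) ^ (-(r / d)) * (t + |(k : ℝ)|) ^ (-(s / d))
  have hpt : ∀ ν : ι → ℤ, (1 + R ν) ^ (-r) * (t + R ν) ^ (-s) ≤ ∏ i, G (ν i) := fun ν => by
    have hR0 : 0 ≤ R ν := (abs_nonneg _).trans (hR ν i₀)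
    rw [hsplit _ r (by positivity), hsplit _ s (by positivity), ← Finset.prod_mul_distrib]
    refine Finset.prod_le_prod (fun i _ => by positivity) fun i _ => ?_
    dsimp only [G]
    gcongr ?_ * ?_
    · exact Real.rpow_le_rpow_of_nonpos (by positivity) (by linarith [hR ν i]) (by
        have := div_nonneg hr hd.le; linarith)
    · exact Real.rpow_le_rpow_of_nonpos (by positivity) (by linarith [hR ν i]) (by
        have := div_nonneg (hr.trans (hrd.trans hrs).le) hd.le; linarith)
  calc ∑' ν : ι → ℤ, ENNReal.ofReal ((1 + R ν) ^ (-r) * (t + R ν) ^ (-s))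
      ≤ ∑' ν : ι → ℤ, ∏ i, ENNReal.ofReal (G (ν i)) := ENNReal.tsum_le_tsum fun ν =>
        (ENNReal.ofReal_le_ofReal (hpt ν)).trans_eq
          (ENNReal.ofReal_prod_of_nonneg fun i _ => by positivity)
    _ ≤ ∏ _i : ι, ∑' k : ℤ, ENNReal.ofReal (G k) :=
        ENNReal.tsum_prod_apply_le_prod_tsum fun _ k => ENNReal.ofReal (G k)
    _ ≤ ∏ _i : ι, ENNReal.ofReal (C₀ * t ^ (1 - r / d - s / d)) := Finset.prod_le_prod' fun _ _ =>
        tsum_int_one_add_abs_rpow_neg_mul_add_abs_rpow_neg_le (div_nonneg hr hd.le) hr1 hrs1 ht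
    _ = _ := by
        have hexp : (1 - r / d - s / d) * d = d - r - s := by field_simp
        rw [Finset.prod_const, Finset.card_univ, hd_eq, ENNReal.ofReal_mul hC₀, mul_pow,
          ← ENNReal.ofReal_pow (Real.rpow_nonneg (zero_le_one.trans ht) _),
          ← Real.rpow_mul_natCast (zero_le_one.trans ht), hexp,
          ENNReal.coe_pow]
        rfl

theorem zn_nonneg (n : ℕ) (ν : Fin n → ℤ) : 0 ≤ zn n ν := Real.sqrt_nonneg _

theorem abs_le_zn {n : ℕ} (ν : Fin n → ℤ) (i : Fin n) : |(ν i : ℝ)| ≤ zn n ν := by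
  rw [zn, ← Real.sqrt_sq_eq_abs]
  exact Real.sqrt_le_sqrt
    (Finset.single_le_sum (f := fun k => ((ν k : ℝ)) ^ 2) (fun k _ => sq_nonneg _)
      (Finset.mem_univ i))

theorem tsum_blocks_one_add_rpow_neg_mul_add_rpow_neg_le (k n : ℕ) {r s : ℝ} (hr : 0 ≤ r)
    (hrd : r < k * n) (hrs : k * n < r + s) :
    ∃ C : ℝ≥0, ∀ t : ℝ, 1 ≤ t →
      ∑' y : Fin k → Fin n → ℤ, ENNReal.ofReal
          ((1 + ∑ j, zn n (y j)) ^ (-r) * (t + ∑ j, zn n (y j)) ^ (-s)) ≤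
        C * ENNReal.ofReal (t ^ ((k * n : ℝ) - r - s)) := by
  have hcard : (Fintype.card (Fin k × Fin n) : ℝ) = k * n := by simp
  obtain ⟨C, hC⟩ := tsum_lattice_one_add_rpow_neg_mul_add_rpow_neg_le (ι := Fin k × Fin n) hr
    (hcard ▸ hrd) (hcard ▸ hrs)
  refine ⟨C, fun t ht => ?_⟩
  have hblock : ∀ (w : Fin k × Fin n → ℤ) (ji : Fin k × Fin n),
      |(w ji : ℝ)| ≤ ∑ j, zn n (fun i => w (j, i)) := fun w ji =>
    (abs_le_zn (fun i => w (ji.1, i)) ji.2).trans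
      (Finset.single_le_sum (f := fun j => zn n (fun i => w (j, i)))
        (fun j _ => zn_nonneg n _) (Finset.mem_univ ji.1))
  rw [← (Equiv.curry (Fin k) (Fin n) ℤ).tsum_eq, ← hcard]
  exact hC _ hblock t ht

theorem tsum_kernel_mul_tail_weight_le (n N' : ℕ) (hn : 1 ≤ n) (hN' : 1 ≤ N') :
    ∃ C : ℝ≥0, ∀ x : Fin n → ℤ,
      ∑' y : Fin N' → Fin n → ℤ,
          ENNReal.ofReal ((1 + (zn n x + ∑ j, zn n (y j))) ^ (-(((N' + 1 : ℕ) : ℝ) * n / 2))) *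
            ENNReal.ofReal ((1 + ∑ j, zn n (y j)) ^ (-((N' : ℝ) * n / 2))) ≤
        C * ENNReal.ofReal ((1 + zn n x) ^ (-((n : ℝ) / 2))) := by
  have hn' : (1 : ℝ) ≤ n := by exact_mod_cast hn
  have hN'' : (1 : ℝ) ≤ N' := by exact_mod_cast hN'
  obtain ⟨C, hC⟩ := tsum_blocks_one_add_rpow_neg_mul_add_rpow_neg_le N' n
    (r := (N' : ℝ) * n / 2) (s := ((N' + 1 : ℕ) : ℝ) * n / 2) (by positivity) (by nlinarith)
    (by push_cast; nlinarith)
  refine ⟨C, fun x => ?_⟩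
  have hexp : (N' : ℝ) * n - N' * n / 2 - ((N' + 1 : ℕ) : ℝ) * n / 2 = -((n : ℝ) / 2) := by
    push_cast; ring
  rw [← hexp]
  refine le_trans (le_of_eq (tsum_congr fun y => ?_)) (hC _ (by linarith [zn_nonneg n x]))
  have hy : 0 ≤ ∑ j, zn n (y j) := Finset.sum_nonneg fun j _ => zn_nonneg n (y j)
  rw [← ENNReal.ofReal_mul (Real.rpow_nonneg (by linarith [zn_nonneg n x]) _), mul_comm, add_assoc]

theorem tsum_kernel_mul_head_weight_le (n N' : ℕ) (hn : 1 ≤ n) (hN' : 1 ≤ N') :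
    ∃ C : ℝ≥0, ∀ y : Fin N' → Fin n → ℤ,
      ∑' x : Fin n → ℤ,
          ENNReal.ofReal ((1 + (zn n x + ∑ j, zn n (y j))) ^ (-(((N' + 1 : ℕ) : ℝ) * n / 2))) *
            ENNReal.ofReal ((1 + zn n x) ^ (-((n : ℝ) / 2))) ≤
        C * ENNReal.ofReal ((1 + ∑ j, zn n (y j)) ^ (-((N' : ℝ) * n / 2))) := by
  have hn' : (1 : ℝ) ≤ n := by exact_mod_cast hn
  have hN'' : (1 : ℝ) ≤ N' := by exact_mod_cast hN'
  have hcard : (Fintype.card (Fin n) : ℝ) = n := by simp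
  obtain ⟨C, hC⟩ := tsum_lattice_one_add_rpow_neg_mul_add_rpow_neg_le (ι := Fin n)
    (r := (n : ℝ) / 2) (s := ((N' + 1 : ℕ) : ℝ) * n / 2) (by positivity) (by rw [hcard]; linarith)
    (by rw [hcard]; push_cast; nlinarith)
  refine ⟨C, fun y => ?_⟩
  have hexp : (Fintype.card (Fin n) : ℝ) - n / 2 - ((N' + 1 : ℕ) : ℝ) * n / 2 =
      -((N' : ℝ) * n / 2) := by
    rw [hcard]; push_cast; ring
  rw [← hexp]
  have hy : 1 ≤ 1 + ∑ j, zn n (y j) := by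
    linarith [Finset.sum_nonneg fun j (_ : j ∈ Finset.univ) => zn_nonneg n (y j)]
  refine le_trans (le_of_eq (tsum_congr fun x => ?_)) (hC _ abs_le_zn _ hy)
  rw [← ENNReal.ofReal_mul (Real.rpow_nonneg (by linarith [zn_nonneg n x]) _), mul_comm,
    add_assoc, add_comm (∑ j, zn n (y j))]

/-- (Lemma 2.4.)
`Σ_{ν_1,…,ν_N} (1+|ν_1|+⋯+|ν_N|)^{−Nn/2} Π_j A_j(ν_j) ≲ Π_j ‖A_j‖_{ℓ²(ℤ^n)}`. -/
theorem statement7 (n N : ℕ) (hn : 1 ≤ n) (hN : 2 ≤ N) :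
    ∃ C : ℝ≥0, ∀ A : Fin N → (Fin n → ℤ) → ℝ, (∀ j ν, 0 ≤ A j ν) →
      (∑' ν : Fin N → Fin n → ℤ,
          ENNReal.ofReal ((1 + ∑ j, zn n (ν j)) ^ (-(N * n / 2 : ℝ))) *
            ∏ j, ENNReal.ofReal (A j (ν j)))
        ≤ C * ∏ j, (∑' μ : Fin n → ℤ, ENNReal.ofReal (A j μ) ^ 2) ^ (1 / 2 : ℝ) := by
  obtain ⟨N', rfl⟩ : ∃ N', N = N' + 1 := ⟨N - 1, by omega⟩
  obtain ⟨C₁, hC₁⟩ := tsum_kernel_mul_tail_weight_le n N' hn (by omega)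
  obtain ⟨C₂, hC₂⟩ := tsum_kernel_mul_head_weight_le n N' hn (by omega)
  refine ⟨(C₁ * C₂) ^ (1 / 2 : ℝ), fun A _ => ?_⟩
  have hweight : ∀ u : ℝ, 0 ≤ u → ∀ e : ℝ, ENNReal.ofReal ((1 + u) ^ e) ≠ 0 := fun u hu e =>
    (ENNReal.ofReal_pos.mpr (Real.rpow_pos_of_pos (by linarith) e)).ne'
  set a : (Fin n → ℤ) → ℝ≥0∞ := fun x => ENNReal.ofReal (A 0 x)
  set b : (Fin N' → Fin n → ℤ) → ℝ≥0∞ := fun y => ∏ j, ENNReal.ofReal (A j.succ (y j))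
  calc ∑' ν : Fin (N' + 1) → Fin n → ℤ,
          ENNReal.ofReal ((1 + ∑ j, zn n (ν j)) ^ (-(((N' + 1 : ℕ) : ℝ) * n / 2))) *
            ∏ j, ENNReal.ofReal (A j (ν j))
      = ∑' x, ∑' y, ENNReal.ofReal
            ((1 + (zn n x + ∑ j, zn n (y j))) ^ (-(((N' + 1 : ℕ) : ℝ) * n / 2))) * (a x * b y) := by
        rw [← (Fin.consEquiv fun _ => Fin n → ℤ).tsum_eq, ENNReal.tsum_prod']
        simp [Fin.sum_univ_succ, Fin.prod_univ_succ, a, b]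
    _ ≤ (C₁ * C₂ : ℝ≥0∞) ^ (1 / 2 : ℝ) * (∑' x, a x ^ 2) ^ (1 / 2 : ℝ) *
          (∑' y, b y ^ 2) ^ (1 / 2 : ℝ) :=
        ENNReal.schur_test _ (fun x => hweight _ (zn_nonneg n x) _) (fun _ => ENNReal.ofReal_ne_top)
          (fun y => hweight _ (Finset.sum_nonneg fun j _ => zn_nonneg n (y j)) _)
          (fun _ => ENNReal.ofReal_ne_top) hC₁ hC₂ a b
    _ ≤ _ := by
        rw [Fin.prod_univ_succ, ENNReal.coe_rpow_of_nonneg _ (by norm_num), ENNReal.coe_mul,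
          mul_assoc]
        gcongr
        exact ENNReal.tsum_prod_apply_sq_rpow_half_le fun (j : Fin N') μ => ENNReal.ofReal (A j.succ μ)

end
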